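/- For R > 1 let p₀(x) := ∏_{c ∈ ℤ + 1/2, |c| ≤ R+1} ∏_{i=1}^n (x_i − c), a polynomial of degree at most C(n)·R. Then there is a constant c(n) > 0 such that for every Q ∈ 𝒬_R and every v ∈ ℝ^n, the directed area of Z_{p₀} in Q in direction v is at least c(n)|v|, i.e. ∫_{smooth points of Z_{p₀} in Q} |⟨v, ∇p₀(x)/|∇p₀(x)|⟩| dH^{n-1}(x) ≥ c(n)|v|. -/

import Mathlib

open MeasureTheory
open scoped ENNReal

noncomputable section

abbrev Euc (n : ℕ) : Type := EuclideanSpace ℝ (Fin n)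

def dyadicCube {n : ℕ} (a : Fin n → ℤ) : Set (Euc n) :=
  {x | ∀ i, (a i : ℝ) ≤ x i ∧ x i < (a i : ℝ) + 1}

def polyEval {n : ℕ} (q : MvPolynomial (Fin n) ℝ) (x : Euc n) : ℝ :=
  MvPolynomial.eval (fun i => x i) q

/-- The gradient of a polynomial, as a vector in `ℝ^n`. -/
def polyGrad {n : ℕ} (q : MvPolynomial (Fin n) ℝ) (x : Euc n) : Euc n :=
  (EuclideanSpace.equiv (Fin n) ℝ).symm
    (fun i => MvPolynomial.eval (fun l => x l) (MvPolynomial.pderiv i q))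

/-- The smooth points of the zero set `Z_q`. -/
def smoothZeros {n : ℕ} (q : MvPolynomial (Fin n) ℝ) : Set (Euc n) :=
  {x | polyEval q x = 0 ∧ polyGrad q x ≠ 0}

/-- The directed area (directional surface area) of `Z_q` in `S` in direction `v`:
`∫_{smooth points of Z_q in S} |⟨v, ∇q(x)/|∇q(x)|⟩| dH^{n-1}(x)`. -/
def dirArea {n : ℕ} (q : MvPolynomial (Fin n) ℝ) (S : Set (Euc n)) (v : Euc n) : ℝ≥0∞ :=
  ∫⁻ x in smoothZeros q ∩ S,
    ENNReal.ofReal |(inner ℝ v (‖polyGrad q x‖⁻¹ • polyGrad q x) : ℝ)| ∂ μH[(n : ℝ) - 1]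

/-- The polynomial `p₀(x) = ∏_{c ∈ ℤ+1/2, |c| ≤ R+1} ∏_{i=1}^n (x_i - c)`;
the half-integers `c = k + 1/2` with `|c| ≤ R + 1` are exactly those with
`k ∈ [⌈-R - 3/2⌉, ⌊R + 1/2⌋]`. -/
def gridPoly (n : ℕ) (R : ℝ) : MvPolynomial (Fin n) ℝ :=
  ∏ k ∈ Finset.Icc ⌈-R - 3/2⌉ ⌊R + 1/2⌋,
    ∏ i : Fin n, (MvPolynomial.X i - MvPolynomial.C ((k : ℝ) + 1/2))

/-!
On the face `x_i = a_i + 1/2` of the cube `Q_a`, away from the finitely many other grid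
hyperplanes, exactly one linear factor of `p₀` vanishes, so these points are smooth zeros of `p₀`
with gradient parallel to `e_i`, and the integrand there equals `|v_i|`. Such a face slice is
isometric to the unit box of `ℝ^{n-1}` minus a null set, so its `H^{n-1}`-measure is at least `1`.
The slices for different `i` are disjoint, whence the directed area is at least
`∑ i, |v_i| ≥ |v|`. The degree bound just counts the at most `2R + 3` half-integers `c`.
-/

open MvPolynomial

section LinearFactors

variable {R σ ι : Type*} [CommRing R]

theorem pderiv_prod_X_sub_C_of_ne {u j : σ} (h : u ≠ j) (s : Finset ι) (c : ι → R) :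
    pderiv u (∏ k ∈ s, (X j - C (c k))) = 0 := by
  induction s using Finset.cons_induction with
  | empty => simp
  | cons k s hk ih => simp [Finset.prod_cons, ih, pderiv_X_of_ne h.symm]

theorem eval_pderiv_mul_of_eval_eq_zero {p : MvPolynomial σ R} {x : σ → R} (hp : eval x p = 0)
    (u : σ) (q : MvPolynomial σ R) :
    eval x (pderiv u (p * q)) = eval x (pderiv u p) * eval x q := by
  simp [hp, mul_comm]

theorem eval_prod_X_sub_C_eq_zero {i : σ} {s : Finset ι} {k₀ : ι} (hk₀ : k₀ ∈ s) (c : ι → R)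
    {x : σ → R} (hx : x i = c k₀) : eval x (∏ k ∈ s, (X i - C (c k))) = 0 := by
  rw [map_prod]
  exact Finset.prod_eq_zero hk₀ (by simp [hx])

theorem eval_pderiv_prod_X_sub_C [DecidableEq ι] {i : σ} {s : Finset ι} {k₀ : ι} (hk₀ : k₀ ∈ s)
    (c : ι → R) {x : σ → R} (hx : x i = c k₀) :
    eval x (pderiv i (∏ k ∈ s, (X i - C (c k)))) = ∏ k ∈ s.erase k₀, (c k₀ - c k) := by
  rw [← Finset.mul_prod_erase s _ hk₀,
    eval_pderiv_mul_of_eval_eq_zero (by simp [hx])]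
  simp [hx]

variable [Fintype σ]

theorem eval_prod_prod_X_sub_C_eq_zero {i : σ} {s : Finset ι} {k₀ : ι} (hk₀ : k₀ ∈ s)
    (c : ι → R) {x : σ → R} (hx : x i = c k₀) :
    eval x (∏ j, ∏ k ∈ s, (X j - C (c k))) = 0 := by
  rw [map_prod]
  exact Finset.prod_eq_zero (Finset.mem_univ i) (eval_prod_X_sub_C_eq_zero hk₀ c hx)

theorem eval_pderiv_prod_prod_X_sub_C [DecidableEq σ] [DecidableEq ι] {i : σ} {s : Finset ι}
    {k₀ : ι} (hk₀ : k₀ ∈ s) (c : ι → R) {x : σ → R} (hx : x i = c k₀) (u : σ) :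
    eval x (pderiv u (∏ j, ∏ k ∈ s, (X j - C (c k)))) =
      (Pi.single i ((∏ k ∈ s.erase k₀, (c k₀ - c k)) *
        ∏ j ∈ Finset.univ.erase i, ∏ k ∈ s, (x j - c k)) : σ → R) u := by
  rw [← Finset.mul_prod_erase _ _ (Finset.mem_univ i),
    eval_pderiv_mul_of_eval_eq_zero (eval_prod_X_sub_C_eq_zero hk₀ c hx)]
  rcases eq_or_ne u i with rfl | hu
  · rw [Pi.single_eq_same, eval_pderiv_prod_X_sub_C hk₀ c hx, map_prod]
    simp
  · simp [pderiv_prod_X_sub_C_of_ne hu, hu]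

end LinearFactors

section EuclideanSpace

variable {ι : Type*} [Fintype ι]

theorem volume_le_hausdorffMeasure_preimage_ofLp (s : Set (ι → ℝ)) :
    volume s ≤ μH[Fintype.card ι] (WithLp.ofLp ⁻¹' s : Set (EuclideanSpace ℝ ι)) := by
  have h := (PiLp.lipschitzWith_ofLp 2 (fun _ : ι => ℝ)).hausdorffMeasure_image_le
    (Nat.cast_nonneg (Fintype.card ι)) (WithLp.ofLp ⁻¹' s)
  rwa [Set.image_preimage_eq s (WithLp.ofLp_surjective 2), hausdorffMeasure_pi_real,
    ENNReal.coe_one, ENNReal.one_rpow, one_mul] at h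

theorem volume_pi_Ico_diff_of_countable (a : ι → ℝ) {T : Set ℝ} (hT : T.Countable) :
    volume (Set.univ.pi fun j => Set.Ico (a j) (a j + 1) \ T) = 1 := by
  simp [volume_pi_pi, measure_sdiff_null (hT.measure_zero volume)]

theorem EuclideanSpace.norm_le_sum_abs (v : EuclideanSpace ℝ ι) : ‖v‖ ≤ ∑ i, |v i| := by
  conv_lhs => rw [← (EuclideanSpace.basisFun ι ℝ).sum_repr v]
  refine (norm_sum_le _ _).trans_eq ?_
  simp [norm_smul]

variable [DecidableEq ι]

theorem abs_inner_normalize_single (v : EuclideanSpace ℝ ι) (i : ι) {D : ℝ}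
    (hD : D ≠ 0) :
    |(inner ℝ v (‖EuclideanSpace.single i D‖⁻¹ • EuclideanSpace.single i D) : ℝ)| = |v i| := by
  rw [real_inner_smul_right, EuclideanSpace.inner_single_right, PiLp.norm_single]
  simp [abs_mul, hD]

def insertCoord (i : ι) (c : ℝ) (y : EuclideanSpace ℝ {j // j ≠ i}) : EuclideanSpace ℝ ι :=
  WithLp.toLp 2 fun j => if h : j = i then c else y ⟨j, h⟩

theorem isometry_insertCoord (i : ι) (c : ℝ) : Isometry (insertCoord i c) := by
  refine Isometry.of_dist_eq fun y z => ?_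
  have h_eq : ∀ j : {j // j = i}, insertCoord i c y j = insertCoord i c z j := by
    rintro ⟨_, rfl⟩
    simp [insertCoord]
  have h_ne : ∀ (w : EuclideanSpace ℝ {j // j ≠ i}) (j : {j // j ≠ i}), insertCoord i c w j = w j :=
    fun w j => dif_neg j.2
  rw [EuclideanSpace.dist_eq, EuclideanSpace.dist_eq,
    ← Fintype.sum_subtype_add_sum_subtype (· = i)]
  simp only [h_eq, h_ne, dist_self]
  simp

end EuclideanSpace

theorem Int.natCast_card_Icc_ceil_floor_le {a b : ℝ} (h : a ≤ b + 1) :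
    ((Finset.Icc ⌈a⌉ ⌊b⌋).card : ℝ) ≤ b - a + 1 := by
  rw [Int.card_Icc, ← Int.cast_natCast, Int.toNat_eq_max]
  push_cast
  exact max_le (by linarith [Int.floor_le b, Int.le_ceil a]) (by linarith)

section GridPolynomial

variable {n : ℕ}

def gridIndices (R : ℝ) : Finset ℤ := Finset.Icc ⌈-R - 3/2⌉ ⌊R + 1/2⌋

def halfInt (k : ℤ) : ℝ := k + 1/2

theorem halfInt_injective : Function.Injective halfInt := fun k l h => by
  simpa [halfInt] using h

def gridValues (R : ℝ) : Set ℝ := halfInt '' gridIndices R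

theorem gridValues_finite (R : ℝ) : (gridValues R).Finite :=
  (gridIndices R).finite_toSet.image _

theorem gridPoly_eq_prod_prod (n : ℕ) (R : ℝ) :
    gridPoly n R = ∏ j : Fin n, ∏ k ∈ gridIndices R, (X j - C (halfInt k)) :=
  Finset.prod_comm

theorem totalDegree_gridPoly_le (n : ℕ) (R : ℝ) :
    (gridPoly n R).totalDegree ≤ (gridIndices R).card * n := by
  refine (totalDegree_finsetProd _ _).trans (Finset.sum_le_card_nsmul _ _ _ fun k _ => ?_)
  refine (totalDegree_finsetProd _ _).trans
    ((Finset.sum_le_card_nsmul _ _ 1 fun i _ => ?_).trans_eq (by simp))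
  exact (totalDegree_sub_C_le _ _).trans (totalDegree_X i).le

theorem mem_gridIndices_of_infDist_le {R : ℝ} {a : Fin n → ℤ}
    (h : Metric.infDist 0 (dyadicCube a) ≤ R) (j : Fin n) : a j ∈ gridIndices R := by
  have hne : (dyadicCube a).Nonempty :=
    ⟨WithLp.toLp 2 fun j => (a j : ℝ), fun j => ⟨le_rfl, lt_add_one _⟩⟩
  obtain ⟨y, hy, hdist⟩ :=
    (Metric.infDist_lt_iff hne).1 (h.trans_lt (lt_add_of_pos_right R one_half_pos))
  have hyj : |y j| < R + 1/2 :=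
    (PiLp.norm_apply_le y j).trans_lt (by rwa [dist_zero_left] at hdist)
  obtain ⟨hy₁, hy₂⟩ := abs_lt.1 hyj
  obtain ⟨ha₁, ha₂⟩ := hy j
  rw [gridIndices, Finset.mem_Icc, Int.ceil_le, Int.le_floor]
  constructor <;> linarith

def faceSlice (G : Set ℝ) (a : Fin n → ℤ) (i : Fin n) : Set (Euc n) :=
  {x | x i = halfInt (a i) ∧ ∀ j, j ≠ i → x j ∈ Set.Ico (a j : ℝ) (a j + 1) \ G}

theorem measurableSet_faceSlice {G : Set ℝ} (hG : MeasurableSet G) (a : Fin n → ℤ) (i : Fin n) :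
    MeasurableSet (faceSlice G a i) := by
  simp only [faceSlice, Set.ofPred_and, Set.ofPred_forall]
  exact (measurableSet_eq_fun (by fun_prop) measurable_const).inter
    (.iInter fun j => .iInter fun _ => (measurableSet_Ico.diff hG).preimage (by fun_prop))

theorem faceSlice_subset_dyadicCube (G : Set ℝ) (a : Fin n → ℤ) (i : Fin n) :
    faceSlice G a i ⊆ dyadicCube a := by
  intro x ⟨hxi, hx⟩ j
  rcases eq_or_ne j i with rfl | hj
  · rw [hxi, halfInt]
    constructor <;> linarith
  · exact (hx j hj).1

theorem one_le_hausdorffMeasure_faceSlice {G : Set ℝ} (hG : G.Countable) (a : Fin n → ℤ)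
    (i : Fin n) : 1 ≤ μH[(n : ℝ) - 1] (faceSlice G a i) := by
  have hcard : (Fintype.card {j // j ≠ i} : ℝ) = n - 1 := by
    rw [Fintype.card_subtype_compl, Fintype.card_subtype_eq, Fintype.card_fin,
      Nat.cast_sub (Fin.pos i), Nat.cast_one]
  have hsub : WithLp.ofLp ⁻¹' (Set.univ.pi fun j : {j // j ≠ i} => Set.Ico (a j : ℝ) (a j + 1) \ G)
      ⊆ insertCoord i (halfInt (a i)) ⁻¹' faceSlice G a i :=
    fun y hy => ⟨dif_pos rfl, fun j hj => by simpa [insertCoord, hj] using hy ⟨j, hj⟩ trivial⟩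
  rw [← hcard]
  calc 1 = volume (Set.univ.pi fun j : {j // j ≠ i} => Set.Ico (a j : ℝ) (a j + 1) \ G) :=
        (volume_pi_Ico_diff_of_countable _ hG).symm
    _ ≤ μH[Fintype.card {j // j ≠ i}] (insertCoord i (halfInt (a i)) ⁻¹' faceSlice G a i) :=
        (volume_le_hausdorffMeasure_preimage_ofLp _).trans (measure_mono hsub)
    _ = μH[Fintype.card {j // j ≠ i}] (faceSlice G a i ∩ Set.range (insertCoord i _)) :=
        (isometry_insertCoord i _).hausdorffMeasure_preimage (.inl (Nat.cast_nonneg _)) _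
    _ ≤ _ := measure_mono Set.inter_subset_left

theorem polyGrad_gridPoly_eq_single {R : ℝ} {a : Fin n → ℤ} {i : Fin n}
    (hai : a i ∈ gridIndices R) {x : Euc n} (hx : x ∈ faceSlice (gridValues R) a i) :
    ∃ D ≠ 0, polyGrad (gridPoly n R) x = EuclideanSpace.single i D := by
  refine ⟨(∏ k ∈ (gridIndices R).erase (a i), (halfInt (a i) - halfInt k)) *
    ∏ j ∈ Finset.univ.erase i, ∏ k ∈ gridIndices R, (x j - halfInt k), ?_, PiLp.ext fun u => ?_⟩
  · refine mul_ne_zero (Finset.prod_ne_zero_iff.2 fun k hk => ?_)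
      (Finset.prod_ne_zero_iff.2 fun j hj => Finset.prod_ne_zero_iff.2 fun k hk => ?_)
    · exact sub_ne_zero.2 (halfInt_injective.ne (Finset.ne_of_mem_erase hk).symm)
    · exact sub_ne_zero.2 fun h => (hx.2 j (Finset.ne_of_mem_erase hj)).2 ⟨k, hk, h.symm⟩
  · rw [PiLp.single_apply, ← Pi.single_apply, gridPoly_eq_prod_prod]
    exact eval_pderiv_prod_prod_X_sub_C hai halfInt hx.1 u

theorem faceSlice_subset_smoothZeros {R : ℝ} {a : Fin n → ℤ} {i : Fin n}
    (hai : a i ∈ gridIndices R) :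
    faceSlice (gridValues R) a i ⊆ smoothZeros (gridPoly n R) := by
  intro x hx
  obtain ⟨D, hD, hgrad⟩ := polyGrad_gridPoly_eq_single hai hx
  refine ⟨?_, by simpa [hgrad] using hD⟩
  rw [polyEval, gridPoly_eq_prod_prod]
  exact eval_prod_prod_X_sub_C_eq_zero hai halfInt hx.1

end GridPolynomial

section DirectedArea

variable {n : ℕ}

def dirAreaDensity (q : MvPolynomial (Fin n) ℝ) (v x : Euc n) : ℝ≥0∞ :=
  ENNReal.ofReal |(inner ℝ v (‖polyGrad q x‖⁻¹ • polyGrad q x) : ℝ)|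

theorem dirArea_eq_lintegral_dirAreaDensity (q : MvPolynomial (Fin n) ℝ) (S : Set (Euc n))
    (v : Euc n) :
    dirArea q S v = ∫⁻ x in smoothZeros q ∩ S, dirAreaDensity q v x ∂μH[(n : ℝ) - 1] :=
  rfl

variable {R : ℝ} {a : Fin n → ℤ}

theorem ofReal_abs_le_lintegral_faceSlice {i : Fin n} (hai : a i ∈ gridIndices R) (v : Euc n) :
    ENNReal.ofReal |v i| ≤
      ∫⁻ x in faceSlice (gridValues R) a i, dirAreaDensity (gridPoly n R) v x ∂μH[(n : ℝ) - 1] := by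
  have hG := gridValues_finite R
  calc ENNReal.ofReal |v i|
      ≤ ENNReal.ofReal |v i| * μH[(n : ℝ) - 1] (faceSlice (gridValues R) a i) :=
        le_mul_of_one_le_right' (one_le_hausdorffMeasure_faceSlice hG.countable a i)
    _ = ∫⁻ _ in faceSlice (gridValues R) a i, ENNReal.ofReal |v i| ∂μH[(n : ℝ) - 1] :=
        (setLIntegral_const _ _).symm
    _ ≤ _ := by
        refine setLIntegral_mono' (measurableSet_faceSlice hG.measurableSet a i) fun x hx => ?_
        obtain ⟨D, hD, hgrad⟩ := polyGrad_gridPoly_eq_single hai hx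
        rw [dirAreaDensity, hgrad, abs_inner_normalize_single v i hD]

theorem pairwise_disjoint_faceSlice (ha : ∀ j, a j ∈ gridIndices R) :
    Pairwise (Function.onFun Disjoint (faceSlice (gridValues R) a)) :=
  fun _ i' hii' => Set.disjoint_left.2 fun _ hx hx' =>
    (hx.2 i' hii'.symm).2 ⟨a i', ha i', hx'.1.symm⟩

theorem ofReal_norm_le_dirArea_gridPoly (ha : ∀ j, a j ∈ gridIndices R) (v : Euc n) :
    ENNReal.ofReal ‖v‖ ≤ dirArea (gridPoly n R) (dyadicCube a) v := by
  calc ENNReal.ofReal ‖v‖ ≤ ∑ i, ENNReal.ofReal |v i| := by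
        rw [← ENNReal.ofReal_sum_of_nonneg fun i _ => abs_nonneg (v i)]
        exact ENNReal.ofReal_le_ofReal (EuclideanSpace.norm_le_sum_abs v)
    _ ≤ ∑ i, ∫⁻ x in faceSlice (gridValues R) a i,
          dirAreaDensity (gridPoly n R) v x ∂μH[(n : ℝ) - 1] :=
        Finset.sum_le_sum fun i _ => ofReal_abs_le_lintegral_faceSlice (ha i) v
    _ = ∫⁻ x in ⋃ i, faceSlice (gridValues R) a i,
          dirAreaDensity (gridPoly n R) v x ∂μH[(n : ℝ) - 1] := by
        rw [lintegral_iUnion (measurableSet_faceSlice (gridValues_finite R).measurableSet a)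
          (pairwise_disjoint_faceSlice ha), tsum_fintype]
    _ ≤ dirArea (gridPoly n R) (dyadicCube a) v := by
        rw [dirArea_eq_lintegral_dirAreaDensity]
        exact lintegral_mono_set <| Set.iUnion_subset fun i =>
          Set.subset_inter (faceSlice_subset_smoothZeros (ha i)) (faceSlice_subset_dyadicCube _ a i)

end DirectedArea

/-- **Lower bound for the directed areas of the grid polynomial**
(inequality (2.4) / `eq:p0-normal-measure`): `p₀` has degree `≲ R` and, for every
unit dyadic cube `Q` within distance `R` of the origin and every `v ∈ ℝ^n`, the
directed area of `Z_{p₀}` in `Q` in direction `v` is `≳ |v|`. -/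
theorem grid_polynomial_directed_area (n : ℕ) :
    ∃ C c : ℝ, 0 < C ∧ 0 < c ∧
      ∀ R : ℝ, 1 < R →
        ((gridPoly n R).totalDegree : ℝ) ≤ C * R ∧
        ∀ a : Fin n → ℤ, Metric.infDist 0 (dyadicCube a) ≤ R →
          ∀ v : Euc n,
            ENNReal.ofReal (c * ‖v‖) ≤ dirArea (gridPoly n R) (dyadicCube a) v := by
  refine ⟨5 * (n + 1), 1, by positivity, one_pos, fun R hR => ⟨?_, fun a ha v => ?_⟩⟩
  · have hcard : ((gridIndices R).card : ℝ) ≤ 2 * R + 3 := by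
      have := Int.natCast_card_Icc_ceil_floor_le (a := -R - 3/2) (b := R + 1/2) (by linarith)
      rw [gridIndices]
      linarith
    calc ((gridPoly n R).totalDegree : ℝ) ≤ (gridIndices R).card * n := by
          exact_mod_cast totalDegree_gridPoly_le n R
      _ ≤ (2 * R + 3) * n := by gcongr
      _ ≤ 5 * (n + 1) * R := by nlinarith [(n.cast_nonneg : (0 : ℝ) ≤ n)]
  · rw [one_mul]
    exact ofReal_norm_le_dirArea_gridPoly (mem_gridIndices_of_infDist_le ha) v

end
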